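/- Let p_n denote the n-th prime and let F = (F₁, F₂) : ℕ → ℕ² be a total, injective, computable function such that for every n, either (im F)_n := { m : (n,m) ∈ im F } is empty or p_n ∈ (im F)_n ⊆ { p_n^k : k ≥ 1 }. Let G be the group with presentation whose generators are a_n (n ∈ ℕ) and b_m (for each m > 1 that is a power of a prime), and whose relators are the commutators [a_n, b_m] for all n and all m that are powers of p_n, together with a_{F₁(n)}^{-1} b_{F₂(n)}^n for all n ∈ ℕ. Then for every n ∈ ℕ: there exists z ∈ ℤ with a_n = b_{p_n}^z in G if and only if n lies in the range of F₁. Consequently, if the range of F₁ is not computable, then PP[1] is undecidable for G, i.e. the set of pairs of words (u, v) such that ⟦u⟧ = ⟦v⟧^z has a solution z ∈ ℤ in G is not computable. -/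

import Mathlib

/-- The `n`-th prime number (`nthPrime 0 = 2`). -/
noncomputable def nthPrime (n : ℕ) : ℕ := Nat.nth Nat.Prime n

/-- Generators: `Sum.inl n` is the generator `aₙ` (`n ∈ ℕ`), and `Sum.inr (n, k)` is the
generator `b_m` for the prime power `m = pₙ^(k+1) > 1`; every `m > 1` that is a power of
a prime is uniquely of this form. -/
abbrev PGen : Type := ℕ ⊕ ℕ × ℕ

open scoped commutatorElement

/-- The relators: the commutators `⁅aₙ, b_m⁆` for all `n` and all powers `m` of `pₙ`,
together with `a_{F₁(i)}⁻¹ b_{F₂(i)}^i` for all `i ∈ ℕ` (the generator `b_{F₂(i)}`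
being `Sum.inr ((F i).1, k)` where `F₂(i) = p_{F₁(i)}^(k+1)`). -/
noncomputable def pRels (F : ℕ → ℕ × ℕ) : Set (FreeGroup PGen) :=
  { r | ∃ n k : ℕ, r = ⁅(FreeGroup.of (Sum.inl n) : FreeGroup PGen), FreeGroup.of (Sum.inr (n, k))⁆ } ∪
  { r | ∃ i k : ℕ, (F i).2 = nthPrime (F i).1 ^ (k + 1) ∧
      r = (FreeGroup.of (Sum.inl (F i).1) : FreeGroup PGen)⁻¹ * FreeGroup.of (Sum.inr ((F i).1, k)) ^ i }

/-- The element of the presented group represented by a word over the generators. -/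
noncomputable def pEval (F : ℕ → ℕ × ℕ) (w : List (PGen × Bool)) : PresentedGroup (pRels F) :=
  PresentedGroup.mk (pRels F) (FreeGroup.mk w)

/-- The hypotheses on `F = (F₁, F₂)`: total (automatic), injective, computable, and for
every `n` the section `(im F)ₙ = { m | (n, m) ∈ im F }` is empty or satisfies
`pₙ ∈ (im F)ₙ ⊆ { pₙ^k | k ≥ 1 }`. -/
structure PAdmissible (F : ℕ → ℕ × ℕ) : Prop where
  inj : Function.Injective F
  comp : Computable F
  sections : ∀ n : ℕ, { m : ℕ | (n, m) ∈ Set.range F } = ∅ ∨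
    (nthPrime n ∈ { m : ℕ | (n, m) ∈ Set.range F } ∧
      { m : ℕ | (n, m) ∈ Set.range F } ⊆ { m : ℕ | ∃ k : ℕ, 1 ≤ k ∧ m = nthPrime n ^ k })

/-!
If `n = F₁(i)`, the sections hypothesis yields `j` with `F j = (n, pₙ)`, and the relator indexed
by `j` reads `aₙ = b_{pₙ}^j`. If `n ∉ im F₁`, then `aₙ` occurs in no relator
`a_{F₁(i)}⁻¹ b_{F₂(i)}^i`, so the exponent sum of `aₙ` is a homomorphism `G → ℤ`; it is `1` on `aₙ`
and `0` on every power of a `b`. Hence `n ↦ (aₙ, b_{pₙ})` many-one reduces `im F₁` to PP[1].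
-/

namespace PAdmissible

variable {F : ℕ → ℕ × ℕ}

theorem exists_eq_nthPrime (hF : PAdmissible F) {n : ℕ} (hn : n ∈ Set.range fun i => (F i).1) :
    ∃ j, F j = (n, nthPrime n) := by
  obtain ⟨i, rfl⟩ := hn
  rcases hF.sections (F i).1 with hempty | ⟨hp, -⟩
  · exact (Set.eq_empty_iff_forall_notMem.mp hempty _ ⟨i, rfl⟩).elim
  · exact hp

end PAdmissible

noncomputable def exponentSumInl (F : ℕ → ℕ × ℕ) (n : ℕ)
    (hn : n ∉ Set.range fun i => (F i).1) : PresentedGroup (pRels F) →* Multiplicative ℤ :=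
  PresentedGroup.toGroup (f := Sum.elim (Pi.mulSingle n (Multiplicative.ofAdd 1)) 1) <| by
    rintro r (⟨m, k, rfl⟩ | ⟨i, k, -, rfl⟩)
    · rw [map_commutatorElement, commutatorElement_eq_one_iff_commute]
      exact Commute.all _ _
    · have hi : (F i).1 ≠ n := fun h => hn ⟨i, h⟩
      simp [hi]

section pRels

variable {F : ℕ → ℕ × ℕ}

theorem of_inl_eq_of_inr_pow {i k : ℕ} (h : (F i).2 = nthPrime (F i).1 ^ (k + 1)) :
    (PresentedGroup.of (rels := pRels F) (Sum.inl (F i).1)) =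
      (PresentedGroup.of (rels := pRels F) (Sum.inr ((F i).1, k))) ^ i := by
  rw [PresentedGroup.of, PresentedGroup.of, ← map_pow]
  exact PresentedGroup.mk_eq_mk_of_inv_mul_mem (Or.inr ⟨i, k, h, rfl⟩)

theorem of_inl_ne_zpow_of_inr {n : ℕ} (hn : n ∉ Set.range fun i => (F i).1) (x : ℕ × ℕ)
    (z : ℤ) :
    (PresentedGroup.of (rels := pRels F) (Sum.inl n)) ≠
      (PresentedGroup.of (rels := pRels F) (Sum.inr x)) ^ z := by
  intro h
  have := congrArg (exponentSumInl F n hn) h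
  simp [exponentSumInl, PresentedGroup.toGroup.of] at this

theorem exists_of_inl_eq_zpow_iff (hF : PAdmissible F) (n : ℕ) :
    (∃ z : ℤ,
      (PresentedGroup.of (rels := pRels F) (Sum.inl n)) =
        (PresentedGroup.of (rels := pRels F) (Sum.inr (n, 0))) ^ z) ↔
      n ∈ Set.range fun i => (F i).1 := by
  refine ⟨fun ⟨z, hz⟩ => ?_, fun hn => ?_⟩
  · by_contra hn
    exact of_inl_ne_zpow_of_inr hn _ z hz
  · obtain ⟨j, hj⟩ := hF.exists_eq_nthPrime hn
    have hpow : (F j).2 = nthPrime (F j).1 ^ (0 + 1) := by simp [hj]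
    refine ⟨j, ?_⟩
    simpa [hj] using of_inl_eq_of_inr_pow hpow

end pRels

theorem computable_singleton_words :
    Computable fun n : ℕ => ([((Sum.inl n : PGen), true)], [((Sum.inr (n, 0) : PGen), true)]) :=
  have hinl : Primrec fun n : ℕ => [((Sum.inl n : PGen), true)] :=
    Primrec.list_cons.comp ((Primrec.sumInl.comp Primrec.id).pair (Primrec.const true))
      (Primrec.const [])
  have hinr : Primrec fun n : ℕ => [((Sum.inr (n, 0) : PGen), true)] :=
    Primrec.list_cons.comp
      ((Primrec.sumInr.comp (Primrec.id.pair (Primrec.const 0))).pair (Primrec.const true))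
      (Primrec.const [])
  (hinl.pair hinr).to_comp

theorem pEval_singleton (F : ℕ → ℕ × ℕ) (x : PGen) :
    pEval F [(x, true)] = PresentedGroup.of x := by
  simp [pEval, PresentedGroup.of, FreeGroup.of]

theorem pGroup_PP1_undecidable (F : ℕ → ℕ × ℕ) (hF : PAdmissible F) :
    (∀ n : ℕ,
      (∃ z : ℤ,
        (PresentedGroup.of (rels := pRels F) (Sum.inl n)) =
          (PresentedGroup.of (rels := pRels F) (Sum.inr (n, 0))) ^ z) ↔
        n ∈ Set.range fun i => (F i).1) ∧
    (¬ ComputablePred (fun n : ℕ => n ∈ Set.range fun i => (F i).1) →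
      ¬ ComputablePred fun p : List (PGen × Bool) × List (PGen × Bool) =>
          ∃ z : ℤ, pEval F p.1 = pEval F p.2 ^ z) := by
  refine ⟨exists_of_inl_eq_zpow_iff hF, fun hRange hPP => hRange ?_⟩
  refine ComputablePred.computable_of_manyOneReducible
    ⟨_, computable_singleton_words, fun n => ?_⟩ hPP
  simpa only [pEval_singleton] using (exists_of_inl_eq_zpow_iff hF n).symm
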